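/- arXiv:hep-th/0007194 — 2 statements merged into one kernel-verified Lean document; each statement's English description precedes it below -/
import Mathlib

section
/- Let d ≠ 1 be a real (or rational) parameter and let φ(u) = u^{(1+d)/(1−d)} and ψ(u) = (d(3d−1)/(24(d−1))) · log u for u > 0. Then φ and ψ satisfy the genus-1 equation (1/24) φ''' + φ'' ψ' − 2 φ' ψ'' = 0. -/
open Real Filter Set

private lemma deriv_C_rpow (C p : ℝ) {x : ℝ} (hx : 0 < x) :
    deriv (fun v : ℝ => C * v ^ p) x = C * p * x ^ (p - 1) := by
  have h := ((Real.hasDerivAt_rpow_const (p := p) (Or.inl hx.ne')).const_mul C).deriv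
  rw [h]; ring

private lemma ev_rpow (C p : ℝ) {u : ℝ} (hu : 0 < u) :
    deriv (fun v : ℝ => C * v ^ p) =ᶠ[nhds u] fun v => C * p * v ^ (p - 1) := by
  filter_upwards [Ioi_mem_nhds hu] with v hv
  exact deriv_C_rpow C p hv

private lemma deriv_C_log (C : ℝ) {x : ℝ} (hx : 0 < x) :
    deriv (fun v : ℝ => C * Real.log v) x = C * x⁻¹ := by
  exact ((Real.hasDerivAt_log hx.ne').const_mul C).deriv

private lemma deriv_C_inv (C : ℝ) {x : ℝ} (hx : 0 < x) :
    deriv (fun v : ℝ => C * v⁻¹) x = C * (-(x ^ 2)⁻¹) := by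
  exact ((hasDerivAt_inv hx.ne').const_mul C).deriv

/-- For `φ(u) = u^((1+d)/(1-d))` and `ψ(u) = (d(3d-1)/(24(d-1))) log u`, `d ≠ 1`,
the genus-1 equation `(1/24) φ''' + φ'' ψ' − 2 φ' ψ'' = 0` holds on `(0,∞)`. -/
theorem genus_one_equation_two_primaries
    (d : ℝ) (hd : d ≠ 1)
    (φ ψ : ℝ → ℝ)
    (hφ : ∀ u : ℝ, 0 < u → φ u = u ^ ((1 + d) / (1 - d)))
    (hψ : ∀ u : ℝ, 0 < u → ψ u = (d * (3 * d - 1) / (24 * (d - 1))) * Real.log u) :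
    ∀ u : ℝ, 0 < u →
      (1 / 24) * iteratedDeriv 3 φ u + iteratedDeriv 2 φ u * deriv ψ u
        - 2 * deriv φ u * iteratedDeriv 2 ψ u = 0 := by
  intro u hu
  set a : ℝ := (1 + d) / (1 - d) with ha_def
  set c : ℝ := d * (3 * d - 1) / (24 * (d - 1)) with hc_def
  have ha : φ =ᶠ[nhds u] fun v => 1 * v ^ a := by
    filter_upwards [Ioi_mem_nhds hu] with v hv
    simp [hφ v hv]
  have hb : ψ =ᶠ[nhds u] fun v => c * Real.log v := by
    filter_upwards [Ioi_mem_nhds hu] with v hv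
    simp [hψ v hv]
  have h1 : deriv φ =ᶠ[nhds u] fun v => 1 * a * v ^ (a - 1) :=
    ha.deriv.trans (ev_rpow 1 a hu)
  have h2 : deriv (deriv φ) =ᶠ[nhds u] fun v => 1 * a * (a - 1) * v ^ (a - 1 - 1) :=
    h1.deriv.trans (ev_rpow (1 * a) (a - 1) hu)
  have h3 : deriv (deriv (deriv φ)) u
      = 1 * a * (a - 1) * (a - 1 - 1) * u ^ (a - 1 - 1 - 1) :=
    (h2.deriv.trans (ev_rpow (1 * a * (a - 1)) (a - 1 - 1) hu)).eq_of_nhds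
  have hψ1 : deriv ψ =ᶠ[nhds u] fun v => c * v⁻¹ := by
    refine hb.deriv.trans ?_
    filter_upwards [Ioi_mem_nhds hu] with v hv
    exact deriv_C_log c hv
  have hψ2 : deriv (deriv ψ) u = c * (-(u ^ 2)⁻¹) := by
    rw [hψ1.deriv.eq_of_nhds]
    exact deriv_C_inv c hu
  have e1 : u ^ (a - 1 - 1) = u ^ (a - 1 - 1 - 1) * u := by
    rw [← Real.rpow_add_one hu.ne' (a - 1 - 1 - 1)]; ring_nf
  have e2 : u ^ (a - 1) = u ^ (a - 1 - 1 - 1) * u * u := by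
    rw [← Real.rpow_add_one hu.ne' (a - 1 - 1 - 1), ← Real.rpow_add_one hu.ne']; ring_nf
  have key : a * (a - 1) * (a - 1 - 1) / 24 + a * (a - 1) * c + 2 * a * c = 0 := by
    have h1d : (1 : ℝ) - d ≠ 0 := sub_ne_zero.mpr (Ne.symm hd)
    have hd1 : d - 1 ≠ 0 := sub_ne_zero.mpr hd
    rw [ha_def, hc_def]
    field_simp
    ring
  clear_value a c
  simp only [iteratedDeriv_succ, iteratedDeriv_zero]
  rw [h3, h2.eq_of_nhds, h1.eq_of_nhds, hψ1.eq_of_nhds, hψ2, e1, e2]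
  have hu2 : (u : ℝ) ^ 2 ≠ 0 := pow_ne_zero 2 hu.ne'
  field_simp
  linear_combination (24 * u ^ (a - 1 - 1 - 1)) * key
end

section
/- Let d ∉ {1, −1} and set φ(u) = u^{(1+d)/(1−d)}, ψ(u) = (d(3d−1)/(24(d−1))) log u, and h_0(u) = −(d(3d−1)(3d−5)(d−2)/(5760(d+1))) · u^{(d−3)/(1−d)} for u > 0. Then φ' h_0' − (1/2) φ'' h_0 − (1/48) ψ'''' − (3/5) ψ''' ψ' + (9/10) (ψ'')^2 = 0. -/
/-- If two functions agree on `(0, ∞)`, their derivatives agree there. -/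
lemma deriv_congr_pos {f g : ℝ → ℝ} (h : ∀ x : ℝ, 0 < x → f x = g x)
    {x : ℝ} (hx : 0 < x) : deriv f x = deriv g x := by
  apply Filter.EventuallyEq.deriv_eq
  filter_upwards [Ioi_mem_nhds hx] with y hy using h y hy

/-- Derivative of `K * x ^ a` at a positive point. -/
lemma deriv_mul_rpow (K a : ℝ) {x : ℝ} (hx : 0 < x) :
    deriv (fun y : ℝ => K * y ^ a) x = (K * a) * x ^ (a - 1) := by
  rw [deriv_const_mul _ (Real.differentiableAt_rpow_const_of_ne a hx.ne'),
    Real.deriv_rpow_const x a]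
  ring

/-- The reduced Belorousski–Pandharipande equation
`φ' h₀' − (1/2) φ'' h₀ − (1/48) ψ'''' − (3/5) ψ''' ψ' + (9/10) (ψ'')² = 0`
holds for `φ(u) = u^((1+d)/(1-d))`, `ψ(u) = (d(3d-1)/(24(d-1))) log u`, and
`h₀(u) = −(d(3d−1)(3d−5)(d−2)/(5760(d+1))) u^((d−3)/(1−d))`, for `d ∉ {1, −1}`. -/
theorem belorousski_pandharipande_reduction
    (d : ℝ) (hd1 : d ≠ 1) (hdm1 : d ≠ -1)
    (φ ψ h₀ : ℝ → ℝ)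
    (hφ : ∀ u : ℝ, 0 < u → φ u = u ^ ((1 + d) / (1 - d)))
    (hψ : ∀ u : ℝ, 0 < u → ψ u = (d * (3 * d - 1) / (24 * (d - 1))) * Real.log u)
    (hh : ∀ u : ℝ, 0 < u →
      h₀ u = -(d * (3 * d - 1) * (3 * d - 5) * (d - 2) / (5760 * (d + 1)))
        * u ^ ((d - 3) / (1 - d))) :
    ∀ u : ℝ, 0 < u →
      deriv φ u * deriv h₀ u - (1 / 2) * iteratedDeriv 2 φ u * h₀ u
        - (1 / 48) * iteratedDeriv 4 ψ u
        - (3 / 5) * iteratedDeriv 3 ψ u * deriv ψ u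
        + (9 / 10) * (iteratedDeriv 2 ψ u) ^ 2 = 0 := by
  intro u hu
  set a : ℝ := (1 + d) / (1 - d) with ha
  set b : ℝ := (d - 3) / (1 - d) with hb
  set c : ℝ := d * (3 * d - 1) / (24 * (d - 1)) with hc
  set k : ℝ := -(d * (3 * d - 1) * (3 * d - 5) * (d - 2) / (5760 * (d + 1))) with hk
  have h1d : (1 : ℝ) - d ≠ 0 := sub_ne_zero.2 (Ne.symm hd1)
  have hd1' : d - 1 ≠ 0 := sub_ne_zero.2 hd1
  have hdp1 : d + 1 ≠ 0 := by
    intro h; apply hdm1; linarith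
  -- derivatives of φ
  have hφ1 : ∀ x : ℝ, 0 < x → deriv φ x = (1 * a) * x ^ (a - 1) := by
    intro x hx
    rw [deriv_congr_pos (g := fun y : ℝ => 1 * y ^ a) (fun y hy => by rw [hφ y hy]; ring) hx]
    exact deriv_mul_rpow 1 a hx
  have hφ2 : iteratedDeriv 2 φ u = ((1 * a) * (a - 1)) * u ^ (a - 1 - 1) := by
    rw [show (2 : ℕ) = 1 + 1 from rfl, iteratedDeriv_succ, iteratedDeriv_one,
      deriv_congr_pos hφ1 hu]
    exact deriv_mul_rpow (1 * a) (a - 1) hu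
  -- derivatives of h₀
  have hh1 : deriv h₀ u = (k * b) * u ^ (b - 1) := by
    rw [deriv_congr_pos (g := fun y : ℝ => k * y ^ b) (fun y hy => hh y hy) hu]
    exact deriv_mul_rpow k b hu
  -- derivatives of ψ
  have hψ1 : ∀ x : ℝ, 0 < x → deriv ψ x = c * x ^ (-1 : ℝ) := by
    intro x hx
    rw [deriv_congr_pos (g := fun y : ℝ => c * Real.log y) (fun y hy => hψ y hy) hx,
      deriv_const_mul _ (Real.differentiableAt_log hx.ne'), Real.deriv_log,
      Real.rpow_neg_one]
  have hψ2 : ∀ x : ℝ, 0 < x → iteratedDeriv 2 ψ x = (c * (-1)) * x ^ (-2 : ℝ) := by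
    intro x hx
    rw [show (2 : ℕ) = 1 + 1 from rfl, iteratedDeriv_succ, iteratedDeriv_one,
      deriv_congr_pos hψ1 hx, deriv_mul_rpow c (-1) hx]
    norm_num
  have hψ3 : ∀ x : ℝ, 0 < x → iteratedDeriv 3 ψ x = ((c * (-1)) * (-2)) * x ^ (-3 : ℝ) := by
    intro x hx
    rw [show (3 : ℕ) = 2 + 1 from rfl, iteratedDeriv_succ,
      deriv_congr_pos hψ2 hx, deriv_mul_rpow (c * (-1)) (-2) hx]
    norm_num
  have hψ4 : iteratedDeriv 4 ψ u = (((c * (-1)) * (-2)) * (-3)) * u ^ (-4 : ℝ) := by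
    rw [show (4 : ℕ) = 3 + 1 from rfl, iteratedDeriv_succ,
      deriv_congr_pos hψ3 hu, deriv_mul_rpow ((c * (-1)) * (-2)) (-3) hu]
    norm_num
  -- rpow combination facts
  have R1 : u ^ (a - 1) * u ^ (b - 1) = u ^ (-4 : ℝ) := by
    rw [← Real.rpow_add hu]
    congr 1
    rw [ha, hb]; field_simp; ring
  have R2 : u ^ (a - 1 - 1) * u ^ b = u ^ (-4 : ℝ) := by
    rw [← Real.rpow_add hu]
    congr 1
    rw [ha, hb]; field_simp; ring
  have R3 : u ^ (-3 : ℝ) * u ^ (-1 : ℝ) = u ^ (-4 : ℝ) := by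
    rw [← Real.rpow_add hu]; norm_num
  have R4 : (u ^ (-2 : ℝ)) ^ 2 = u ^ (-4 : ℝ) := by
    rw [sq, ← Real.rpow_add hu]; norm_num
  -- the scalar identity
  have key : a * (k * b) - (1 / 2) * (a * (a - 1)) * k + c / 8
      - (6 / 5) * c ^ 2 + (9 / 10) * c ^ 2 = 0 := by
    rw [ha, hb, hc, hk]
    field_simp
    ring
  rw [hφ1 u hu, hφ2, hh1, hh u hu, hψ1 u hu, hψ2 u hu, hψ3 u hu, hψ4]
  linear_combination (a * k * b) * R1 - ((1 / 2) * a * (a - 1) * k) * R2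
    - (6 / 5) * c ^ 2 * R3 + (9 / 10) * c ^ 2 * R4 + (u ^ (-4 : ℝ)) * key
end
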